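/- Let g : ℝᵏ × ℝˢ → ℝˢ be of class C^∞ and suppose that for every (p,q) ∈ ℝᵏ × ℝˢ the partial derivative ∂₂g(p,q) : ℝˢ → ℝˢ is a linear isomorphism. Let J ⊆ ℝ be an open interval, let x : J → ℝᵏ be of class C¹ on J, and let y : J → ℝˢ be continuous on J with g(x(t), y(t)) = 0 for all t ∈ J. Then y is of class C¹ on J (i.e., y is differentiable on J with continuous derivative). -/

import Mathlib

/-- Let `g : ℝᵏ × ℝˢ → ℝˢ` be `C^∞` with the partial derivative in
the second variable a linear isomorphism at every point. If `x` is `C¹` on an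
open interval `J`, `y` is continuous on `J`, and `g (x t, y t) = 0` on `J`, then
`y` is `C¹` on `J`. -/
theorem second_component_C1_of_constraint (k s : ℕ)
    (g : (Fin k → ℝ) × (Fin s → ℝ) → (Fin s → ℝ))
    (hg : ContDiff ℝ (⊤ : ℕ∞) g)
    (h2 : ∀ (p : Fin k → ℝ) (q : Fin s → ℝ),
      Function.Bijective (fderiv ℝ (fun y => g (p, y)) q))
    (J : Set ℝ) (hJopen : IsOpen J) (hJconn : J.OrdConnected)
    (x : ℝ → (Fin k → ℝ)) (y : ℝ → (Fin s → ℝ))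
    (hx : ContDiffOn ℝ 1 x J)
    (hy : ContinuousOn y J)
    (hconstr : ∀ t ∈ J, g (x t, y t) = 0) :
    ContDiffOn ℝ 1 y J := by
  set G : ((Fin k → ℝ) × (Fin s → ℝ)) → ((Fin k → ℝ) × (Fin s → ℝ)) := fun z => (z.1, g z) with hGdef
  have hgG : ContDiff ℝ (⊤ : ℕ∞) G := contDiff_fst.prodMk hg
  have hgdiff : Differentiable ℝ g := hg.differentiable (by simp)
  -- derivative of G
  set L : ((Fin k → ℝ) × (Fin s → ℝ)) → (((Fin k → ℝ) × (Fin s → ℝ)) →L[ℝ] ((Fin k → ℝ) × (Fin s → ℝ))) := fun z =>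
    (ContinuousLinearMap.fst ℝ _ _).prod (fderiv ℝ g z) with hLdef
  have hGder : ∀ z, HasFDerivAt G (L z) z := fun z =>
    (hasFDerivAt_fst).prodMk (hgdiff z).hasFDerivAt
  -- partial derivative in second variable
  have hpart : ∀ (p : Fin k → ℝ) (q : Fin s → ℝ),
      HasFDerivAt (fun q' => g (p, q'))
        ((fderiv ℝ g (p, q)).comp (ContinuousLinearMap.inr ℝ (Fin k → ℝ) (Fin s → ℝ))) q := by
    intro p q
    have h1 : HasFDerivAt (fun q' : Fin s → ℝ => ((p, q') : (Fin k → ℝ) × (Fin s → ℝ)))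
        (ContinuousLinearMap.inr ℝ (Fin k → ℝ) (Fin s → ℝ)) q := by
      have h0 : HasFDerivAt (fun q' : Fin s → ℝ => ((p, q') : (Fin k → ℝ) × (Fin s → ℝ)))
          (((0 : (Fin s → ℝ) →L[ℝ] (Fin k → ℝ))).prod (ContinuousLinearMap.id ℝ _)) q :=
        (hasFDerivAt_const p q).prodMk (hasFDerivAt_id q)
      exact h0
    exact (hgdiff (p, q)).hasFDerivAt.comp q h1
  have hLbij : ∀ z, Function.Bijective (L z) := by
    intro z
    have hinj : Function.Injective (L z) := by
      intro w w' hww'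
      have h0 : L z (w - w') = 0 := by rw [map_sub, hww', sub_self]
      rcases Prod.mk.injEq .. ▸ h0 with ⟨h1, h3⟩
      simp only [hLdef, ContinuousLinearMap.prod_apply,
        ContinuousLinearMap.coe_fst'] at h1 h3
      -- h1 : (w - w').1 = 0, h3 : fderiv g z (w - w') = 0
      have hw1 : (w - w').1 = 0 := h1
      have hsplit : (w - w') = ((0 : Fin k → ℝ), (w - w').2) := by
        ext <;> simp [hw1]
      rw [hsplit] at h3
      have h4 : fderiv ℝ (fun q' => g (z.1, q')) z.2 (w - w').2 = 0 := by
        rw [(hpart z.1 z.2).fderiv]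
        simpa using h3
      have h5 : (w - w').2 = 0 := by
        have := (h2 z.1 z.2).injective
        apply this
        rw [h4, map_zero]
      have : w - w' = 0 := by rw [hsplit, h5]; rfl
      exact sub_eq_zero.mp this
    have hsurj : Function.Surjective (L z) :=
      LinearMap.injective_iff_surjective.mp hinj
    exact ⟨hinj, hsurj⟩
  -- continuous linear equiv version
  have hfin : FiniteDimensional ℝ ((Fin k → ℝ) × (Fin s → ℝ)) := by infer_instance
  set eL : ((Fin k → ℝ) × (Fin s → ℝ)) → (((Fin k → ℝ) × (Fin s → ℝ)) ≃L[ℝ] ((Fin k → ℝ) × (Fin s → ℝ))) := fun z =>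
    LinearEquiv.toContinuousLinearEquiv
      (LinearEquiv.ofBijective ((L z : ((Fin k → ℝ) × (Fin s → ℝ)) →L[ℝ] ((Fin k → ℝ) × (Fin s → ℝ))) : ((Fin k → ℝ) × (Fin s → ℝ)) →ₗ[ℝ] ((Fin k → ℝ) × (Fin s → ℝ))) (hLbij z)) with heL
  have heLcoe : ∀ z, ((eL z : ((Fin k → ℝ) × (Fin s → ℝ)) ≃L[ℝ] ((Fin k → ℝ) × (Fin s → ℝ))) : ((Fin k → ℝ) × (Fin s → ℝ)) →L[ℝ] ((Fin k → ℝ) × (Fin s → ℝ))) = L z := by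
    intro z; ext v : 1 <;> rfl
  intro t₀ ht₀
  set a : ((Fin k → ℝ) × (Fin s → ℝ)) := (x t₀, y t₀) with ha
  have hga : g a = 0 := hconstr t₀ ht₀
  have hGa : ContDiffAt ℝ (⊤ : ℕ∞) G a := hgG.contDiffAt
  have hfa' : HasFDerivAt G ((eL a : ((Fin k → ℝ) × (Fin s → ℝ)) ≃L[ℝ] ((Fin k → ℝ) × (Fin s → ℝ))) : ((Fin k → ℝ) × (Fin s → ℝ)) →L[ℝ] ((Fin k → ℝ) × (Fin s → ℝ))) a := by
    rw [heLcoe]; exact hGder a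
  have hn : ((⊤ : ℕ∞) : WithTop ℕ∞) ≠ 0 := by simp
  set φ := hGa.localInverse hfa' hn with hφdef
  have hφ : ContDiffAt ℝ (⊤ : ℕ∞) φ (G a) := hGa.to_localInverse hfa' hn
  have hGa0 : G a = (x t₀, (0 : Fin s → ℝ)) := by
    simp [hGdef, ha, hga, hconstr t₀ ht₀]
  -- left inverse eventually
  have hstrict : HasStrictFDerivAt G ((eL a : ((Fin k → ℝ) × (Fin s → ℝ)) ≃L[ℝ] ((Fin k → ℝ) × (Fin s → ℝ))) : ((Fin k → ℝ) × (Fin s → ℝ)) →L[ℝ] ((Fin k → ℝ) × (Fin s → ℝ))) a :=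
    hGa.hasStrictFDerivAt' hfa' hn
  have hinv : ∀ᶠ z in nhds a, φ (G z) = z := hstrict.eventually_left_inverse
  -- z t := (x t, y t) is continuous at t₀
  have hxc : ContinuousAt x t₀ :=
    (hx.continuousOn.continuousAt (hJopen.mem_nhds ht₀))
  have hyc : ContinuousAt y t₀ := hy.continuousAt (hJopen.mem_nhds ht₀)
  have hzc : ContinuousAt (fun t => ((x t, y t) : (Fin k → ℝ) × (Fin s → ℝ))) t₀ := hxc.prodMk hyc
  have hevJ : ∀ᶠ t in nhds t₀, t ∈ J := hJopen.mem_nhds ht₀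
  have hev : ∀ᶠ t in nhds t₀, y t = (φ (x t, 0)).2 := by
    filter_upwards [hzc.eventually hinv, hevJ] with t h1 h2
    have : ((x t, y t) : (Fin k → ℝ) × (Fin s → ℝ)) ∈ {z | φ (G z) = z} := h1
    have hgt : g (x t, y t) = 0 := hconstr t h2
    have hGt : G (x t, y t) = (x t, (0 : Fin s → ℝ)) := by simp [hGdef, hgt]
    have := h1
    rw [hGt] at this
    exact congrArg Prod.snd this.symm
  -- the candidate C¹ function
  have hpair : ContDiffWithinAt ℝ 1 (fun t => ((x t, (0 : Fin s → ℝ)) : (Fin k → ℝ) × (Fin s → ℝ))) J t₀ :=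
    (hx t₀ ht₀).prodMk contDiffWithinAt_const
  have hφ1 : ContDiffAt ℝ 1 φ ((x t₀, (0 : Fin s → ℝ)) : (Fin k → ℝ) × (Fin s → ℝ)) := by
    rw [← hGa0]; exact hφ.of_le (by simp)
  have hcomp : ContDiffWithinAt ℝ 1 (fun t => φ ((x t, (0 : Fin s → ℝ)) : (Fin k → ℝ) × (Fin s → ℝ))) J t₀ :=
    hφ1.comp_contDiffWithinAt t₀ hpair
  have hF : ContDiffWithinAt ℝ 1 (fun t => (φ ((x t, (0 : Fin s → ℝ)) : (Fin k → ℝ) × (Fin s → ℝ))).2) J t₀ :=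
    (contDiffAt_snd).comp_contDiffWithinAt t₀ hcomp
  refine hF.congr_of_eventuallyEq ?_ ?_
  · exact nhdsWithin_le_nhds hev
  · exact hev.self_of_nhds
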